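/- Let R be a commutative Noetherian ring and p : F → M a morphism of R-modules where F is Matlis reflexive. Then p is a flat cover if and only if the Matlis dual p^∨ : M^∨ → F^∨ is an injective envelope. -/

import Mathlib

universe u

variable (R : Type u) [CommRing R]

/-- A morphism `f : F → M` with `F` flat is a flat precover if every morphism from a
flat module to `M` factors through `f`. -/
def IsFlatPrecover {F M : Type u} [AddCommGroup F] [AddCommGroup M] [Module R F]
    [Module R M] (f : F →ₗ[R] M) : Prop :=
  Module.Flat R F ∧
    ∀ (F' : Type u) [AddCommGroup F'] [Module R F'], Module.Flat R F' →
      ∀ g : F' →ₗ[R] M, ∃ h : F' →ₗ[R] F, f ∘ₗ h = g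

/-- A flat precover `f : F → M` is a flat cover if every `h : F → F` with `f ∘ h = f`
is an automorphism. -/
def IsFlatCover {F M : Type u} [AddCommGroup F] [AddCommGroup M] [Module R F]
    [Module R M] (f : F →ₗ[R] M) : Prop :=
  IsFlatPrecover R f ∧ ∀ h : F →ₗ[R] F, f ∘ₗ h = f → Function.Bijective h

/-- A morphism `i : M → E` is an injective envelope if `E` is injective, `i` is
injective, and the image of `i` is an essential submodule of `E`. -/
def IsInjectiveEnvelope {M E : Type u} [AddCommGroup M] [AddCommGroup E] [Module R M]
    [Module R E] (i : M →ₗ[R] E) : Prop :=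
  Module.Injective R E ∧ Function.Injective i ∧
    ∀ N : Submodule R E, N ≠ ⊥ → N ⊓ LinearMap.range i ≠ ⊥

/-- An injective cogenerator is an injective module `E` such that `Hom(N, E) ≠ 0`
for every nonzero module `N`. -/
def IsInjectiveCogenerator (E : Type u) [AddCommGroup E] [Module R E] : Prop :=
  Module.Injective R E ∧
    ∀ (N : Type u) [AddCommGroup N] [Module R N], (∃ x : N, x ≠ 0) →
      ∃ g : N →ₗ[R] E, g ≠ 0

/-- Given a module `D` (to be thought of as `⊕ E(R/𝔫)`, the direct sum of injective
envelopes of the residue fields of all maximal ideals, so that `Hom_R(-, D)` is the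
Matlis dual), a module `M` is Matlis reflexive if the evaluation map
`M → Hom_R(Hom_R(M, D), D)` is an isomorphism. -/
def IsMatlisReflexive (D : Type u) [AddCommGroup D] [Module R D]
    (M : Type u) [AddCommGroup M] [Module R M] : Prop :=
  Function.Bijective (LinearMap.applyₗ : M →ₗ[R] ((M →ₗ[R] D) →ₗ[R] D))

open DirectSum

/-!
Write `D = ⊕ E(R/𝔫)`. Over a Noetherian ring `D` is an injective cogenerator, so the duality
`(-)^∨ = Hom(-, D)` is faithful, and by the tensor-hom adjunction `F` is flat exactly when `F^∨`
is injective; on maps into a Matlis reflexive `F` the duality is moreover full. Flat covers and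
injective envelopes are both characterised by rigidity (every endomorphism over the base is an
automorphism), and fullness and faithfulness match the endomorphisms `h` of `F` with `p ∘ h = p`
with the endomorphisms `g` of `F^∨` with `g ∘ p^∨ = p^∨`.
-/

open LinearMap

section Envelope

variable {R} {M E : Type u} [AddCommGroup M] [AddCommGroup E] [Module R M] [Module R E]
  {i : M →ₗ[R] E}

theorem IsInjectiveEnvelope.injective_of_comp_eq (hi : IsInjectiveEnvelope R i)
    {g : E →ₗ[R] E} (hg : g ∘ₗ i = i) : Function.Injective g := by
  rw [← ker_eq_bot]
  by_contra hker
  refine hi.2.2 _ hker (eq_bot_iff.mpr ?_)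
  rintro _ ⟨hx, m, rfl⟩
  rw [Submodule.mem_bot, ← hx]
  exact (congr($hg m)).symm

theorem IsInjectiveEnvelope.bijective_of_comp_eq (hi : IsInjectiveEnvelope R i)
    {g : E →ₗ[R] E} (hg : g ∘ₗ i = i) : Function.Bijective g := by
  have hg_inj := hi.injective_of_comp_eq hg
  have := hi.1
  obtain ⟨r, hr⟩ := Module.Injective.extension_property R E E E g hg_inj LinearMap.id
  have hr_inj : Function.Injective r := hi.injective_of_comp_eq <| by
    rw [← hg, ← comp_assoc, hr, id_comp, hg]
  exact ⟨hg_inj, fun y => ⟨r y, hr_inj congr($hr (r y))⟩⟩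

theorem isInjectiveEnvelope_of_forall_injective [Module.Injective R E]
    (hi : Function.Injective i) (h : ∀ g : E →ₗ[R] E, g ∘ₗ i = i → Function.Injective g) :
    IsInjectiveEnvelope R i := by
  refine ⟨inferInstance, hi, fun N hN hmeet => ?_⟩
  have hq : Function.Injective (N.mkQ ∘ₗ i) := by
    rw [← ker_eq_bot, eq_bot_iff]
    intro m hm
    have : i m ∈ N ⊓ range i := ⟨(Submodule.Quotient.mk_eq_zero N).mp hm, mem_range_self i m⟩
    rw [hmeet, Submodule.mem_bot, ← map_zero i] at this
    exact hi this
  obtain ⟨ψ, hψ⟩ := Module.Injective.extension_property R E _ _ _ hq i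
  obtain ⟨n, hnN, hn⟩ := Submodule.exists_mem_ne_zero_of_ne_bot hN
  refine hn (h (ψ ∘ₗ N.mkQ) hψ ?_)
  simp [(Submodule.Quotient.mk_eq_zero N).mpr hnN]

end Envelope

section Duality

open TensorProduct

variable {R} {D : Type u} [AddCommGroup D] [Module R D]
  {A B C : Type u} [AddCommGroup A] [AddCommGroup B] [AddCommGroup C]
  [Module R A] [Module R B] [Module R C]

theorem LinearMap.lcomp_comp (g : B →ₗ[R] C) (f : A →ₗ[R] B) :
    lcomp R D (g ∘ₗ f) = lcomp R D f ∘ₗ lcomp R D g :=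
  rfl

theorem LinearMap.lcomp_bijective_of_bijective {f : A →ₗ[R] B} (hf : Function.Bijective f) :
    Function.Bijective (lcomp R D f) := by
  let e := LinearEquiv.ofBijective f hf
  refine Function.bijective_iff_has_inverse.mpr ⟨lcomp R D e.symm.toLinearMap, ?_, ?_⟩ <;>
    intro φ <;> ext x <;> simp [e]

theorem IsInjectiveCogenerator.exists_apply_ne_zero (hD : IsInjectiveCogenerator R D)
    {x : A} (hx : x ≠ 0) : ∃ φ : A →ₗ[R] D, φ x ≠ 0 := by
  obtain ⟨g, hg⟩ := hD.2 (R ∙ x) ⟨⟨x, Submodule.mem_span_singleton_self x⟩, by simpa using hx⟩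
  have := hD.1
  obtain ⟨φ, hφ⟩ := Module.Injective.extension_property R D _ A (R ∙ x).subtype
    Subtype.val_injective g
  refine ⟨φ, fun hφx => hg (LinearMap.ext fun ⟨y, hy⟩ => ?_)⟩
  obtain ⟨r, rfl⟩ := Submodule.mem_span_singleton.mp hy
  rw [← hφ, comp_apply, Submodule.subtype_apply, map_smul, hφx, smul_zero, LinearMap.zero_apply]

theorem IsInjectiveCogenerator.lcomp_injective (hD : IsInjectiveCogenerator R D)
    {f g : A →ₗ[R] B} (h : lcomp R D f = lcomp R D g) : f = g := by
  ext x
  by_contra hne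
  obtain ⟨φ, hφ⟩ := hD.exists_apply_ne_zero (sub_ne_zero.mpr hne)
  exact hφ (by simpa [sub_eq_zero] using congr($h φ x))

theorem IsInjectiveCogenerator.lcomp_surjective_iff (hD : IsInjectiveCogenerator R D)
    {f : A →ₗ[R] B} : Function.Surjective (lcomp R D f) ↔ Function.Injective f := by
  refine ⟨fun hf => ?_, fun hf φ => ?_⟩
  · rw [← ker_eq_bot, eq_bot_iff]
    intro x hx
    by_contra hx0
    obtain ⟨φ, hφ⟩ := hD.exists_apply_ne_zero hx0
    obtain ⟨ψ, rfl⟩ := hf φ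
    exact hφ (by simp [mem_ker.mp hx])
  · have := hD.1
    exact Module.Injective.extension_property R D A B f hf φ

/-- The tensor-hom adjunction `Hom(N ⊗ A, D) ≃ Hom(N, Hom(A, D))` conjugates the `D`-dual of
`f.rTensor A` to `lcomp f`. -/
theorem IsInjectiveCogenerator.rTensor_injective_iff_lcomp_surjective
    (hD : IsInjectiveCogenerator R D) {f : B →ₗ[R] C} :
    Function.Injective (f.rTensor A) ↔ Function.Surjective (lcomp R (A →ₗ[R] D) f) := by
  have hconj : ⇑(lcomp R D (f.rTensor A)) = lift.equiv (.id R) B A D ∘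
      lcomp R (A →ₗ[R] D) f ∘ (lift.equiv (.id R) C A D).symm := by
    funext φ
    refine TensorProduct.ext' fun b a => ?_
    simp
  rw [← hD.lcomp_surjective_iff, hconj, EquivLike.comp_surjective, EquivLike.surjective_comp]

theorem IsInjectiveCogenerator.flat_iff_injective_hom (hD : IsInjectiveCogenerator R D) :
    Module.Flat R A ↔ Module.Injective R (A →ₗ[R] D) := by
  simp_rw [Module.Flat.iff_rTensor_preserves_injective_linearMap (R := R) (M := A),
    Module.injective_iff, hD.rTensor_injective_iff_lcomp_surjective, Function.Surjective,
    LinearMap.ext_iff, lcomp_apply]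

end Duality

section Reflexive

variable {R} {D : Type u} [AddCommGroup D] [Module R D]
  {A B : Type u} [AddCommGroup A] [AddCommGroup B] [Module R A] [Module R B]

/-- The preimage of `Φ` is `Φ^∨ ∘ ev_B : B → A^∨∨` followed by the inverse of `ev_A`. -/
theorem IsMatlisReflexive.exists_lcomp_eq (hA : IsMatlisReflexive R D A)
    (Φ : (A →ₗ[R] D) →ₗ[R] (B →ₗ[R] D)) : ∃ h : B →ₗ[R] A, lcomp R D h = Φ := by
  let ev := LinearEquiv.ofBijective _ hA
  refine ⟨ev.symm.toLinearMap ∘ₗ lcomp R D Φ ∘ₗ applyₗ, ?_⟩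
  ext ψ b
  change ev (ev.symm _) ψ = _
  rw [ev.apply_symm_apply]
  rfl

theorem IsMatlisReflexive.bijective_of_lcomp_bijective (hD : IsInjectiveCogenerator R D)
    (hA : IsMatlisReflexive R D A) {h : A →ₗ[R] B} (hh : Function.Bijective (lcomp R D h)) :
    Function.Bijective h := by
  let e := LinearEquiv.ofBijective _ hh
  obtain ⟨k, hk⟩ := hA.exists_lcomp_eq e.symm.toLinearMap
  have hkh : k ∘ₗ h = LinearMap.id := hD.lcomp_injective <| by
    rw [lcomp_comp, hk]
    ext φ : 1
    exact e.apply_symm_apply φ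
  have hhk : h ∘ₗ k = LinearMap.id := hD.lcomp_injective <| by
    rw [lcomp_comp, hk]
    ext φ : 1
    exact e.symm_apply_apply φ
  exact Function.bijective_iff_has_inverse.mpr ⟨k, fun a => congr($hkh a), fun b => congr($hhk b)⟩

end Reflexive

section DirectSum

variable {R} {ι : Type u} {E : ι → Type u} [∀ i, AddCommGroup (E i)] [∀ i, Module R (E i)]

theorem DirectSum.exists_finset_apply_eq_zero_of_finite {N : Type u} [AddCommGroup N] [Module R N]
    [Module.Finite R N] (f : N →ₗ[R] ⨁ i, E i) :
    ∃ T : Finset ι, ∀ y i, i ∉ T → f y i = 0 := by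
  classical
  obtain ⟨s, hs⟩ := Module.Finite.fg_top (R := R) (M := N)
  refine ⟨s.biUnion fun x => (f x).support, fun y => ?_⟩
  induction (hs ▸ Submodule.mem_top : y ∈ Submodule.span R s) using Submodule.span_induction with
  | mem x hx =>
    intro i hi
    by_contra hne
    exact hi (Finset.mem_biUnion.mpr ⟨x, hx, DFinsupp.mem_support_iff.mpr hne⟩)
  | zero => simp
  | add x y _ _ hx hy => intro i hi; simp [hx i hi, hy i hi]
  | smul r x _ hx => intro i hi; simp [DirectSum.smul_apply, hx i hi]

/-- Over a Noetherian ring an ideal is finitely generated, so a map from it into a direct sum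
lands in finitely many summands, where Baer's criterion can be checked componentwise. -/
theorem Module.injective_directSum [IsNoetherianRing R] [∀ i, Module.Injective R (E i)] :
    Module.Injective R (⨁ i, E i) := by
  classical
  refine Module.Baer.injective fun I f => ?_
  obtain ⟨T, hT⟩ := DirectSum.exists_finset_apply_eq_zero_of_finite f
  choose g hg using fun i =>
    Module.Baer.of_injective (inferInstanceAs (Module.Injective R (E i))) I
      (DirectSum.component R ι E i ∘ₗ f)
  refine ⟨∑ i ∈ T, DirectSum.lof R ι E i ∘ₗ g i, fun x hx => ?_⟩
  have hgx : ∀ i, g i x = f ⟨x, hx⟩ i := fun i => hg i x hx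
  ext i
  by_cases hi : i ∈ T <;>
    simp [DirectSum.sum_apply, DirectSum.lof_eq_of, DirectSum.of_apply, hgx, hi, hT _ i]

end DirectSum

section Cogenerator

variable {R}

theorem Module.Injective.exists_apply_ne_zero_of_torsionOf_le {E : Type u} [AddCommGroup E]
    [Module R E] [Module.Injective R E] {I : Ideal R} (hI : I ≠ ⊤) {i : R ⧸ I →ₗ[R] E}
    (hi : Function.Injective i) {N : Type u} [AddCommGroup N] [Module R N] {x : N}
    (hx : Ideal.torsionOf R N x ≤ I) : ∃ φ : N →ₗ[R] E, φ x ≠ 0 := by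
  let ψ : (R ∙ x) →ₗ[R] E :=
    i ∘ₗ Submodule.factor hx ∘ₗ (Ideal.quotTorsionOfEquivSpanSingleton R N x).symm
  obtain ⟨φ, hφ⟩ := Module.Injective.extension_property R E _ N (R ∙ x).subtype
    Subtype.val_injective ψ
  have hψx : ψ ⟨x, Submodule.mem_span_singleton_self x⟩ = i 1 := by
    have : (Ideal.quotTorsionOfEquivSpanSingleton R N x).symm
        ⟨x, Submodule.mem_span_singleton_self x⟩ = Submodule.Quotient.mk 1 := by
      rw [LinearEquiv.symm_apply_eq, Ideal.quotTorsionOfEquivSpanSingleton_apply_mk, one_smul]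
    simp [ψ, this]
  have := Ideal.Quotient.nontrivial_iff.mpr hI
  refine ⟨φ, fun hφx => one_ne_zero (hi ?_ : (1 : R ⧸ I) = 0)⟩
  rw [map_zero, ← hψx, ← hφ, comp_apply, Submodule.subtype_apply, hφx]

theorem isInjectiveCogenerator_directSum [IsNoetherianRing R]
    {En : MaximalSpectrum R → Type u} [∀ 𝔫, AddCommGroup (En 𝔫)] [∀ 𝔫, Module R (En 𝔫)]
    [∀ 𝔫, Module.Injective R (En 𝔫)] (j : ∀ 𝔫 : MaximalSpectrum R, (R ⧸ 𝔫.asIdeal) →ₗ[R] En 𝔫)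
    (hj : ∀ 𝔫, Function.Injective (j 𝔫)) : IsInjectiveCogenerator R (⨁ 𝔫, En 𝔫) := by
  classical
  refine ⟨Module.injective_directSum, fun N _ _ ⟨x, hx⟩ => ?_⟩
  obtain ⟨𝔪, h𝔪, hx𝔪⟩ :=
    Ideal.exists_le_maximal _ ((Ideal.torsionOf_eq_top_iff R x).not.mpr hx)
  obtain ⟨φ, hφ⟩ :=
    Module.Injective.exists_apply_ne_zero_of_torsionOf_le h𝔪.ne_top (hj ⟨𝔪, h𝔪⟩) hx𝔪
  refine ⟨DirectSum.lof R _ En ⟨𝔪, h𝔪⟩ ∘ₗ φ, fun h0 => hφ ?_⟩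
  exact (map_eq_zero_iff _ (DirectSum.of_injective _)).mp congr($h0 x)

end Cogenerator

section FlatCover

variable {R} {D : Type u} [AddCommGroup D] [Module R D]
  {F M : Type u} [AddCommGroup F] [AddCommGroup M] [Module R F] [Module R M] {p : F →ₗ[R] M}

theorem IsFlatPrecover.surjective (hp : IsFlatPrecover R p) : Function.Surjective p := by
  obtain ⟨h, hh⟩ := hp.2 (M →₀ R) inferInstance (Finsupp.linearCombination R _root_.id)
  intro m
  obtain ⟨v, rfl⟩ := Finsupp.linearCombination_id_surjective R M m
  exact ⟨h v, congr($hh v)⟩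

theorem IsFlatCover.isInjectiveEnvelope_lcomp (hD : IsInjectiveCogenerator R D)
    (hF : IsMatlisReflexive R D F) (hp : IsFlatCover R p) :
    IsInjectiveEnvelope R (lcomp R D p) := by
  have := (hD.flat_iff_injective_hom).mp hp.1.1
  refine isInjectiveEnvelope_of_forall_injective
    (lcomp_injective_of_surjective p hp.1.surjective) fun g hg => ?_
  obtain ⟨h, rfl⟩ := hF.exists_lcomp_eq g
  have hph : p ∘ₗ h = p := hD.lcomp_injective (by rw [lcomp_comp, hg])
  exact (lcomp_bijective_of_bijective (hp.2 h hph)).1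

theorem IsFlatCover.of_isInjectiveEnvelope_lcomp (hD : IsInjectiveCogenerator R D)
    (hF : IsMatlisReflexive R D F) (hp : IsInjectiveEnvelope R (lcomp R D p)) :
    IsFlatCover R p := by
  have := hp.1
  refine ⟨⟨(hD.flat_iff_injective_hom).mpr hp.1, fun F' _ _ hF' g => ?_⟩, fun h hph => ?_⟩
  · have := (hD.flat_iff_injective_hom).mp hF'
    obtain ⟨k, hk⟩ := Module.Injective.extension_property R (F' →ₗ[R] D) _ _ _ hp.2.1
      (lcomp R D g)
    obtain ⟨h, rfl⟩ := hF.exists_lcomp_eq k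
    exact ⟨h, hD.lcomp_injective (by rw [lcomp_comp, hk])⟩
  · refine hF.bijective_of_lcomp_bijective hD (hp.bijective_of_comp_eq ?_)
    rw [← lcomp_comp, hph]

end FlatCover

/-- The Matlis dualizing module `⊕ E(R/𝔫)` is presented by a family `En 𝔫` of injective
envelopes `j 𝔫 : R/𝔫 → En 𝔫` of the residue fields of the maximal ideals `𝔫` of `R`. -/
theorem flatCover_iff_matlisDual_injectiveEnvelope [IsNoetherianRing R]
    (En : MaximalSpectrum R → Type u) [∀ 𝔫, AddCommGroup (En 𝔫)] [∀ 𝔫, Module R (En 𝔫)]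
    (j : ∀ 𝔫 : MaximalSpectrum R, (R ⧸ 𝔫.asIdeal) →ₗ[R] En 𝔫)
    (hj : ∀ 𝔫, IsInjectiveEnvelope R (j 𝔫))
    {F M : Type u} [AddCommGroup F] [AddCommGroup M] [Module R F] [Module R M]
    (hF : IsMatlisReflexive R (⨁ 𝔫, En 𝔫) F) (p : F →ₗ[R] M) :
    IsFlatCover R p ↔ IsInjectiveEnvelope R (LinearMap.lcomp R (⨁ 𝔫, En 𝔫) p) := by
  have : ∀ 𝔫, Module.Injective R (En 𝔫) := fun 𝔫 => (hj 𝔫).1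
  have hD := isInjectiveCogenerator_directSum j fun 𝔫 => (hj 𝔫).2.1
  exact ⟨IsFlatCover.isInjectiveEnvelope_lcomp hD hF,
    IsFlatCover.of_isInjectiveEnvelope_lcomp hD hF⟩
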